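/- arXiv:1506.00476 — 3 statements merged into one kernel-verified Lean document; each statement's English description precedes it below -/
import Mathlib

section
/- The element θ_z = v^{l(y) - l(x)} T_x T_y^{-1} is well defined: if z = x y^{-1} = x' y'^{-1} with x, y, x', y' dominant weights, then v^{l(y)-l(x)} T_x T_y^{-1} = v^{l(y')-l(x')} T_{x'} T_{y'}^{-1}. -/
/-!
Clearing denominators, `x y⁻¹ = x' y'⁻¹` says `x y' = x' y`. Additivity of `ℓ` on dominant
weights then equates the two powers of `v`, and multiplying on the right by the commuting units
`T_y T_{y'}` turns both sides into `T_{x y'} = T_{x' y}`.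
-/

open LaurentPolynomial

theorem Ring.mul_inverse_eq_mul_inverse_of_mul_eq_mul {M₀ : Type*} [MonoidWithZero M₀]
    {a b u u' : M₀} (hu : IsUnit u) (hu' : IsUnit u') (hcomm : Commute u u')
    (h : a * u' = b * u) : a * Ring.inverse u = b * Ring.inverse u' := by
  apply (hu.mul hu').mul_right_cancel
  calc a * Ring.inverse u * (u * u') = a * u' := by
        rw [← mul_assoc, mul_assoc a, Ring.inverse_mul_cancel u hu, mul_one]
    _ = b * u := h
    _ = b * Ring.inverse u' * (u * u') := by
        rw [hcomm.eq, ← mul_assoc, mul_assoc b, Ring.inverse_mul_cancel u' hu', mul_one]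

theorem theta_well_defined_general {X H : Type*} [CommGroup X] [Ring H]
    [Algebra (LaurentPolynomial ℤ) H]
    (dom : X → Prop) (len : X → ℕ) (Tmap : X → H)
    (hlen : ∀ x y, dom x → dom y → len (x * y) = len x + len y)
    (hTmul : ∀ x y, dom x → dom y → Tmap x * Tmap y = Tmap (x * y))
    (hTunit : ∀ y, dom y → IsUnit (Tmap y)) :
    ∀ x y x' y', dom x → dom y → dom x' → dom y' →
      x * y⁻¹ = x' * y'⁻¹ →
      algebraMap (LaurentPolynomial ℤ) H (T ((len y : ℤ) - (len x : ℤ))) *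
          Tmap x * Ring.inverse (Tmap y) =
      algebraMap (LaurentPolynomial ℤ) H (T ((len y' : ℤ) - (len x' : ℤ))) *
          Tmap x' * Ring.inverse (Tmap y') := by
  intro x y x' y' hx hy hx' hy' hz
  have hxy : x * y' = x' * y := by
    rwa [← div_eq_mul_inv, ← div_eq_mul_inv, div_eq_div_iff_mul_eq_mul] at hz
  have hexp : (len y : ℤ) - len x = len y' - len x' := by
    have := congrArg len hxy
    rw [hlen x y' hx hy', hlen x' y hx' hy] at this
    omega
  have hcomm : Commute (Tmap y) (Tmap y') := by
    rw [Commute, SemiconjBy, hTmul y y' hy hy', hTmul y' y hy' hy, mul_comm]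
  rw [hexp, mul_assoc, mul_assoc]
  congr 1
  refine Ring.mul_inverse_eq_mul_inverse_of_mul_eq_mul (hTunit y hy) (hTunit y' hy') hcomm ?_
  rw [hTmul x y' hx hy', hTmul x' y hx' hy, hxy]

/-- The Bernstein element `θ_z = v^{ℓ(y)-ℓ(x)} T_x T_y⁻¹` is well defined: it does not
depend on the chosen decomposition `z = x y⁻¹` with `x, y` dominant. -/
theorem theta_well_defined {X H : Type*} [CommGroup X] [Ring H]
    [Algebra (LaurentPolynomial ℤ) H]
    (dom : X → Prop) (len : X → ℕ) (Tmap : X → H)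
    (hdomMul : ∀ x y, dom x → dom y → dom (x * y))
    (hlen : ∀ x y, dom x → dom y → len (x * y) = len x + len y)
    (hTmul : ∀ x y, dom x → dom y → Tmap x * Tmap y = Tmap (x * y))
    (hTunit : ∀ y, dom y → IsUnit (Tmap y)) :
    ∀ x y x' y', dom x → dom y → dom x' → dom y' →
      x * y⁻¹ = x' * y'⁻¹ →
      algebraMap (LaurentPolynomial ℤ) H (T ((len y : ℤ) - (len x : ℤ))) *
          Tmap x * Ring.inverse (Tmap y) =
      algebraMap (LaurentPolynomial ℤ) H (T ((len y' : ℤ) - (len x' : ℤ))) *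
          Tmap x' * Ring.inverse (Tmap y') :=
  theta_well_defined_general dom len Tmap hlen hTmul hTunit
end

section
/- The map θ : A[X] → H sending x to θ_x extends to an injective A-algebra homomorphism from the group algebra A[X] onto the subalgebra Θ of H; i.e. Θ is isomorphic as an A-algebra to A[X]. -/
/-!
Since some `T_w` equals `1`, the `θ_x` are among the basis vectors `θ_x T_w`, hence linearly
independent; the lift of `θ` sends `f ∈ A[X]` to the linear combination `∑ f(x) θ_x`, so it is
injective. Its range is generated by the images of the generators `x` of `A[X]`, i.e. by the `θ_x`.
-/

open LaurentPolynomial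

theorem LinearIndependent.of_mul_of_eq_one {R ι κ A : Type*} [Semiring R] [Semiring A]
    [Module R A] {u : ι → A} {v : κ → A}
    (h : LinearIndependent R fun p : ι × κ => u p.1 * v p.2) {k : κ} (hk : v k = 1) :
    LinearIndependent R u := by
  simpa [Function.comp_def, hk] using h.comp _ (Prod.mk_left_injective k)

namespace MonoidAlgebra

variable {R A M : Type*} [CommSemiring R] [Semiring A] [Algebra R A] [Monoid M]

theorem lift_eq_linearCombination (F : M →* A) (f : MonoidAlgebra R M) :
    lift R A M F f = Finsupp.linearCombination R F f.coeff := by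
  rw [lift_apply, Finsupp.linearCombination_apply]

theorem lift_injective_of_linearIndependent {F : M →* A} (hF : LinearIndependent R F) :
    Function.Injective (lift R A M F) := fun f g hfg =>
  coeff_injective <| hF <| by simpa only [lift_eq_linearCombination] using hfg

theorem adjoin_range_of : Algebra.adjoin R (Set.range (of R M)) = ⊤ :=
  eq_top_iff.2 fun f _ => Algebra.adjoin_mono (Set.image_subset_range _ _) (mem_adjoin_support f)

theorem range_lift (F : M →* A) : (lift R A M F).range = Algebra.adjoin R (Set.range F) := by
  rw [← Algebra.map_top, ← adjoin_range_of, AlgHom.map_adjoin, ← Set.range_comp]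
  congr 2
  exact funext (lift_of F)

end MonoidAlgebra

/-- The map `θ : x ↦ θ_x` extends to an injective `A`-algebra homomorphism from the group
algebra `A[X]` onto the subalgebra `Θ` of `H`, i.e. `Θ ≅ A[X]`.  The injectivity uses
that the elements `θ_z T_w` (`z ∈ X`, `w ∈ W₀`) form an `A`-basis of `H`. -/
theorem theta_extends_to_injective_algHom {X W₀ H : Type*} [CommGroup X] [Ring H]
    [Algebra (LaurentPolynomial ℤ) H]
    (θ : X →* H) (Tw : W₀ → H)
    (hbasis : LinearIndependent (LaurentPolynomial ℤ)
      (fun p : X × W₀ => (θ p.1 : H) * Tw p.2))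
    (hTone : ∃ w1 : W₀, Tw w1 = 1) :
    Function.Injective
      (MonoidAlgebra.lift (LaurentPolynomial ℤ) H X θ) ∧
    AlgHom.range (MonoidAlgebra.lift (LaurentPolynomial ℤ) H X θ) =
      Algebra.adjoin (LaurentPolynomial ℤ) (Set.range θ) := by
  obtain ⟨w1, hw1⟩ := hTone
  exact ⟨MonoidAlgebra.lift_injective_of_linearIndependent (hbasis.of_mul_of_eq_one hw1),
    MonoidAlgebra.range_lift θ⟩
end

section
/- In the based ring J_0 with basis t_{d_w w_0 x d_u^{-1}} (w, u ∈ W_0, x ∈ X^+) and multiplication t_{d_w w_0 x d_u^{-1}} t_{d_v w_0 y d_p^{-1}} = δ_{u,v} ∑_{z∈X^+} m_{x,y,z} t_{d_w w_0 z d_p^{-1}}, the map sending t_{d_w w_0 x d_u^{-1}} to the elementary matrix with entry S_x = [V(x)] in position (w,u) is an R_G-algebra isomorphism J_0 ≅ M_{W_0}(R_G). -/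
/-!
A ℤ-linear bijection between rings is a ring isomorphism as soon as it is multiplicative on a
basis. Transport the ℤ-basis `t (w, x, u)` of `J₀` to the ℤ-basis `S x • E_{w,u}` of
`M_{W₀}(R_G)`: products of the latter obey the same structure constants, because
`E_{w,u} E_{v,p} = δ_{u,v} E_{w,p}` and `S x S y = ∑_z m_{x,y,z} S z`.
-/

open Module

theorem Module.Basis.map_mul_of_map_mul_basis {ι R A B : Type*} [CommSemiring R]
    [NonUnitalNonAssocSemiring A] [Module R A] [SMulCommClass R A A] [IsScalarTower R A A]
    [NonUnitalNonAssocSemiring B] [Module R B] [SMulCommClass R B B] [IsScalarTower R B B]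
    (b : Basis ι R A) (f : A →ₗ[R] B) (hf : ∀ i j, f (b i * b j) = f (b i) * f (b j))
    (x y : A) : f (x * y) = f x * f y := by
  have hbilin : (LinearMap.mul R A).compr₂ f = (LinearMap.mul R B).compl₁₂ f f :=
    LinearMap.ext_basis b b hf
  exact LinearMap.congr_fun₂ hbilin x y

theorem Matrix.single_mul_single_eq_ite {n α : Type*} [Fintype n] [DecidableEq n]
    [NonUnitalNonAssocSemiring α] (w u v p : n) (a b : α) :
    single w u a * single v p b = if u = v then single w p (a * b) else 0 := by
  split_ifs with huv
  · rw [huv, single_mul_single_same]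
  · exact single_mul_single_of_ne (h := huv) ..

theorem Matrix.single_finsuppSum_zsmul {n α ι : Type*} [DecidableEq n] [AddCommGroup α]
    (w p : n) (g : ι →₀ ℕ) (s : ι → α) :
    single w p (g.sum fun z k => (k : ℤ) • s z) = g.sum fun z k => (k : ℤ) • single w p (s z) := by
  rw [← singleAddMonoidHom_apply, map_finsuppSum]
  simp only [map_zsmul, singleAddMonoidHom_apply]

theorem Matrix.single_mul_single_of_mul_eq_finsuppSum {n X R : Type*} [Fintype n]
    [DecidableEq n] [NonUnitalNonAssocRing R] (S : X → R) (m : X → X → X →₀ ℕ)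
    (hS : ∀ x y, S x * S y = (m x y).sum fun z k => (k : ℤ) • S z) (w u v p : n) (x y : X) :
    single w u (S x) * single v p (S y) =
      if u = v then (m x y).sum (fun z k => (k : ℤ) • single w p (S z)) else 0 := by
  rw [single_mul_single_eq_ite, hS, single_finsuppSum_zsmul]

noncomputable def Module.Basis.matrixUnits {n ι R M : Type*} [Fintype n] [Semiring R]
    [AddCommMonoid M] [Module R M] (b : Basis ι R M) : Basis (n × ι × n) R (Matrix n n M) :=
  (b.matrix n n).reindex (Equiv.prodCongr (Equiv.refl n) (Equiv.prodComm n ι))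

@[simp]
theorem Module.Basis.matrixUnits_apply {n ι R M : Type*} [Fintype n] [DecidableEq n]
    [Semiring R] [AddCommMonoid M] [Module R M] (b : Basis ι R M) (w u : n) (i : ι) :
    b.matrixUnits (w, i, u) = Matrix.single w u (b i) := by
  simp [matrixUnits]

theorem J0_iso_matrix_ring_general {W₀ Xp J RG : Type*}
    [Fintype W₀] [DecidableEq W₀] [Ring J] [CommRing RG]
    (t : W₀ × Xp × W₀ → J) (S : Xp → RG) (m : Xp → Xp → Xp →₀ ℕ)
    (htbasis : ∃ B : Module.Basis (W₀ × Xp × W₀) ℤ J, ∀ p, B p = t p)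
    (hSbasis : ∃ B : Module.Basis Xp ℤ RG, ∀ x, B x = S x)
    (hS : ∀ x y, S x * S y = (m x y).sum fun z k => (k : ℤ) • S z)
    (hmul : ∀ (w u v p : W₀) (x y : Xp),
      t (w, x, u) * t (v, y, p) =
        if u = v then (m x y).sum (fun z k => (k : ℤ) • t (w, z, p)) else 0) :
    ∃ φ : J ≃+* Matrix W₀ W₀ RG,
      ∀ (w u : W₀) (x : Xp), φ (t (w, x, u)) = Matrix.single w u (S x) := by
  obtain ⟨bt, rfl⟩ : ∃ bt : Basis (W₀ × Xp × W₀) ℤ J, ⇑bt = t :=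
    htbasis.imp fun B hB => funext hB
  obtain ⟨bS, rfl⟩ : ∃ bS : Basis Xp ℤ RG, ⇑bS = S := hSbasis.imp fun B hB => funext hB
  let e : J ≃ₗ[ℤ] Matrix W₀ W₀ RG := bt.equiv bS.matrixUnits (Equiv.refl _)
  have he : ∀ w u x, e (bt (w, x, u)) = Matrix.single w u (bS x) := fun w u x => by
    simp [e]
  have he_mul : ∀ a b, e (a * b) = e a * e b :=
    bt.map_mul_of_map_mul_basis e.toLinearMap fun ⟨w, x, u⟩ ⟨v, y, p⟩ => by
      simp only [LinearEquiv.coe_coe, hmul, he,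
        Matrix.single_mul_single_of_mul_eq_finsuppSum bS m hS]
      split_ifs
      · simp only [map_finsuppSum, map_zsmul, he]
      · exact map_zero e
  exact ⟨{ e.toAddEquiv with map_mul' := he_mul }, he⟩

/-- The based ring `J₀` of the lowest two-sided cell, with ℤ-basis `t_{d_w w₀ x d_u⁻¹}`
(`w, u ∈ W₀`, `x ∈ X⁺`) and multiplication
`t_{d_w w₀ x d_u⁻¹} t_{d_v w₀ y d_p⁻¹} = δ_{u,v} ∑_z m_{x,y,z} t_{d_w w₀ z d_p⁻¹}`, is
isomorphic as a ring (with the evident `R_G`-structure) to the matrix ring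
`M_{W₀}(R_G)`, via `t_{d_w w₀ x d_u⁻¹} ↦ S_x E_{w,u}`.  Here `R_G` has ℤ-basis the
classes `S x` of the irreducible modules `V(x)` with `S x · S y = ∑_z m_{x,y,z} S z`,
`x₀` is the trivial highest weight (`S x₀ = 1`), and `1 = ∑_w t_{d_w w₀ x₀ d_w⁻¹}`. -/
theorem J0_iso_matrix_ring {W₀ Xp J RG : Type*}
    [Fintype W₀] [DecidableEq W₀] [Ring J] [CommRing RG]
    (t : W₀ × Xp × W₀ → J) (S : Xp → RG) (m : Xp → Xp → Xp →₀ ℕ) (x₀ : Xp)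
    (htbasis : ∃ B : Module.Basis (W₀ × Xp × W₀) ℤ J, ∀ p, B p = t p)
    (hSbasis : ∃ B : Module.Basis Xp ℤ RG, ∀ x, B x = S x)
    (hS : ∀ x y, S x * S y = (m x y).sum fun z k => (k : ℤ) • S z)
    (hmul : ∀ (w u v p : W₀) (x y : Xp),
      t (w, x, u) * t (v, y, p) =
        if u = v then (m x y).sum (fun z k => (k : ℤ) • t (w, z, p)) else 0)
    (hS₀ : S x₀ = 1)
    (hone : (1 : J) = ∑ w : W₀, t (w, x₀, w)) :
    ∃ φ : J ≃+* Matrix W₀ W₀ RG,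
      ∀ (w u : W₀) (x : Xp), φ (t (w, x, u)) = Matrix.single w u (S x) :=
  J0_iso_matrix_ring_general t S m htbasis hSbasis hS hmul
end
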